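/- arXiv:2007.09229 — 9 statements merged into one kernel-verified Lean document; each statement's English description precedes it below -/
import Mathlib

section
/- Let α be a weak composition of length n with all parts ≥ 1 that avoids all of the patterns (0,1,2), (0,0,2,2), (0,0,2,1), (1,0,3,2), (1,0,2,2). Fix an index i_m with α_{i_m - 1} < α_{i_m}. If s < i_m - 1 and r > i_m, then either α_s ≥ α_r, or else α_s < α_r with α_s = α_{i_m - 1} and α_{i_m} = α_r = α_{i_m - 1} + 1. -/
open Finset

/-- `α` (on indices `1..n`) contains the composition pattern `β`. -/
def Contains (n : ℕ) (α : ℕ → ℕ) (β : List ℕ) : Prop :=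
  ∃ j : Fin β.length → ℕ, StrictMono j ∧ (∀ s, 1 ≤ j s ∧ j s ≤ n) ∧
    (∀ s t, α (j s) ≤ α (j t) ↔ β.get s ≤ β.get t) ∧
    (∀ s t, |(β.get s : ℤ) - (β.get t : ℤ)| ≤ |(α (j s) : ℤ) - (α (j t) : ℤ)|)

/-- `α` avoids all five patterns in `KM`. -/
def AvoidsKM (n : ℕ) (α : ℕ → ℕ) : Prop :=
  ∀ β ∈ [[0,1,2], [0,0,2,2], [0,0,2,1], [1,0,3,2], [1,0,2,2]], ¬ Contains n α β

/-!
Two occurrences of `(0,1,2)` through `α (im-1) < α im` force `α (im-1) ≤ α s` and `α r ≤ α im`.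
If moreover `α s < α r`, a strict inequality `α (im-1) < α s` would give `(1,0,3,2)` or `(1,0,2,2)`
at `s, im-1, im, r`; then `α r < α im` would give `(0,0,2,1)`, and a gap `α im ≥ α (im-1) + 2`
would give `(0,0,2,2)`.
-/

lemma contains_of_add_le {n : ℕ} {α : ℕ → ℕ} {β : List ℕ} (j : Fin β.length → ℕ)
    (hj : StrictMono j) (hrange : ∀ s, 1 ≤ j s ∧ j s ≤ n)
    (hgap : ∀ s t, β.get s ≤ β.get t → α (j s) + (β.get t - β.get s) ≤ α (j t)) :
    Contains n α β := by
  refine ⟨j, hj, hrange, fun s t => ?_, fun s t => ?_⟩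
  · have := hgap s t
    have := hgap t s
    omega
  · rcases le_total (β.get s) (β.get t) with h | h
    · have := hgap s t h
      rw [abs_of_nonpos (by omega), abs_of_nonpos (by omega)]
      omega
    · have := hgap t s h
      rw [abs_of_nonneg (by omega), abs_of_nonneg (by omega)]
      omega

section

variable {n : ℕ} {α : ℕ → ℕ} {j₁ j₂ j₃ j₄ : ℕ}

lemma contains_012 (h₁ : 1 ≤ j₁) (h₁₂ : j₁ < j₂) (h₂₃ : j₂ < j₃) (h₃ : j₃ ≤ n)
    (v₁₂ : α j₁ < α j₂) (v₂₃ : α j₂ < α j₃) : Contains n α [0,1,2] := by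
  refine contains_of_add_le ![j₁, j₂, j₃] ?_ ?_ ?_
  · exact Fin.strictMono_iff_lt_succ.2 fun i => by fin_cases i <;> simpa
  · intro s; fin_cases s <;> simp <;> omega
  · intro s t; fin_cases s <;> fin_cases t <;> simp <;> omega

lemma contains_0022 (h₁ : 1 ≤ j₁) (h₁₂ : j₁ < j₂) (h₂₃ : j₂ < j₃) (h₃₄ : j₃ < j₄) (h₄ : j₄ ≤ n)
    (v₁₂ : α j₁ = α j₂) (v₂₃ : α j₂ + 2 ≤ α j₃) (v₃₄ : α j₃ = α j₄) :
    Contains n α [0,0,2,2] := by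
  refine contains_of_add_le ![j₁, j₂, j₃, j₄] ?_ ?_ ?_
  · exact Fin.strictMono_iff_lt_succ.2 fun i => by fin_cases i <;> simpa
  · intro s; fin_cases s <;> simp <;> omega
  · intro s t; fin_cases s <;> fin_cases t <;> simp <;> omega

lemma contains_0021 (h₁ : 1 ≤ j₁) (h₁₂ : j₁ < j₂) (h₂₃ : j₂ < j₃) (h₃₄ : j₃ < j₄) (h₄ : j₄ ≤ n)
    (v₁₂ : α j₁ = α j₂) (v₂₄ : α j₂ < α j₄) (v₄₃ : α j₄ < α j₃) :
    Contains n α [0,0,2,1] := by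
  refine contains_of_add_le ![j₁, j₂, j₃, j₄] ?_ ?_ ?_
  · exact Fin.strictMono_iff_lt_succ.2 fun i => by fin_cases i <;> simpa
  · intro s; fin_cases s <;> simp <;> omega
  · intro s t; fin_cases s <;> fin_cases t <;> simp <;> omega

lemma contains_1032 (h₁ : 1 ≤ j₁) (h₁₂ : j₁ < j₂) (h₂₃ : j₂ < j₃) (h₃₄ : j₃ < j₄) (h₄ : j₄ ≤ n)
    (v₂₁ : α j₂ < α j₁) (v₁₄ : α j₁ < α j₄) (v₄₃ : α j₄ < α j₃) :
    Contains n α [1,0,3,2] := by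
  refine contains_of_add_le ![j₁, j₂, j₃, j₄] ?_ ?_ ?_
  · exact Fin.strictMono_iff_lt_succ.2 fun i => by fin_cases i <;> simpa
  · intro s; fin_cases s <;> simp <;> omega
  · intro s t; fin_cases s <;> fin_cases t <;> simp <;> omega

lemma contains_1022 (h₁ : 1 ≤ j₁) (h₁₂ : j₁ < j₂) (h₂₃ : j₂ < j₃) (h₃₄ : j₃ < j₄) (h₄ : j₄ ≤ n)
    (v₂₁ : α j₂ < α j₁) (v₁₃ : α j₁ < α j₃) (v₃₄ : α j₃ = α j₄) :
    Contains n α [1,0,2,2] := by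
  refine contains_of_add_le ![j₁, j₂, j₃, j₄] ?_ ?_ ?_
  · exact Fin.strictMono_iff_lt_succ.2 fun i => by fin_cases i <;> simpa
  · intro s; fin_cases s <;> simp <;> omega
  · intro s t; fin_cases s <;> fin_cases t <;> simp <;> omega

end

theorem stmt1_general (n : ℕ) (α : ℕ → ℕ)
    (hav : AvoidsKM n α)
    (im : ℕ) (himn : im ≤ n) (hasc : α (im - 1) < α im)
    (s r : ℕ) (hs1 : 1 ≤ s) (hs : s < im - 1) (hr : im < r) (hrn : r ≤ n) :
    α r ≤ α s ∨
      (α s < α r ∧ α s = α (im - 1) ∧ α im = α r ∧ α r = α (im - 1) + 1) := by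
  have him : im - 1 < im := by omega
  have hleft : α (im - 1) ≤ α s := not_lt.1 fun h =>
    hav _ (by simp) (contains_012 hs1 hs him himn h hasc)
  have hright : α r ≤ α im := not_lt.1 fun h =>
    hav _ (by simp) (contains_012 (by omega) him hr hrn hasc h)
  rcases le_or_gt (α r) (α s) with hrs | hsr
  · exact Or.inl hrs
  have hleft_eq : α s = α (im - 1) := by
    by_contra hne
    rcases hright.lt_or_eq with hlt | heq
    · exact hav _ (by simp) (contains_1032 hs1 hs him hr hrn (by omega) hsr hlt)
    · exact hav _ (by simp) (contains_1022 hs1 hs him hr hrn (by omega) (by omega) heq.symm)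
  have hright_eq : α im = α r := by
    by_contra hne
    exact hav _ (by simp) (contains_0021 hs1 hs him hr hrn hleft_eq (by omega) (by omega))
  have hstep : α im ≤ α (im - 1) + 1 := not_lt.1 fun h =>
    hav _ (by simp) (contains_0022 hs1 hs him hr hrn hleft_eq h hright_eq)
  exact Or.inr ⟨hsr, hleft_eq, hright_eq, by omega⟩

theorem stmt1 (n : ℕ) (α : ℕ → ℕ) (hpos : ∀ i, 1 ≤ i → i ≤ n → 1 ≤ α i)
    (hav : AvoidsKM n α)
    (im : ℕ) (him2 : 2 ≤ im) (himn : im ≤ n) (hasc : α (im - 1) < α im)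
    (s r : ℕ) (hs1 : 1 ≤ s) (hs : s < im - 1) (hr : im < r) (hrn : r ≤ n) :
    α r ≤ α s ∨
      (α s < α r ∧ α s = α (im - 1) ∧ α im = α r ∧ α r = α (im - 1) + 1) :=
  stmt1_general n α hav im himn hasc s r hs1 hs hr hrn
end

section
/- If the skyline diagram D(α) of a weak composition α contains the southwest s×t rectangle (i.e., α_r ≥ t for all 1 ≤ r ≤ s), then every quasi-key tableau T of shape α satisfies T(r,c) = r for all 1 ≤ r ≤ s and 1 ≤ c ≤ t. -/
/-! Fix a column `c` whose first `s` boxes all lie in the diagram. By strong induction on the row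
`r ≤ s`: the entry `k := T r c` satisfies `k ≤ r`, and if `k < r` then, by induction, row `k` also
holds `k` in column `c`, contradicting distinctness of column entries. Hence `T r c = r`. -/

open Finset

/-- `(i, j)` is a box of the skyline diagram `D(α)`. -/
def InD (n : ℕ) (α : ℕ → ℕ) (i j : ℕ) : Prop :=
  1 ≤ i ∧ i ≤ n ∧ 1 ≤ j ∧ j ≤ α i

/-- `T` is a quasi-key tableau of shape `α` (rules QKT1–QKT4). -/
structure IsQKT (n : ℕ) (α : ℕ → ℕ) (T : ℕ → ℕ → ℕ) : Prop where
  pos : ∀ i j, InD n α i j → 1 ≤ T i j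
  rowDec : ∀ i j j', InD n α i j → InD n α i j' → j ≤ j' → T i j' ≤ T i j
  rowBound : ∀ i j, InD n α i j → T i j ≤ i
  colDistinct : ∀ i i' j, InD n α i j → InD n α i' j → i ≠ i' → T i j ≠ T i' j
  firstColInc : ∀ i i', InD n α i 1 → InD n α i' 1 → i < i' → T i 1 < T i' 1
  qkt3 : ∀ r r' c, InD n α r c → InD n α r' c → r < r' → T r' c < T r c →
      InD n α r (c + 1) ∧ T r' c < T r (c + 1)
  qkt4 : ∀ r s c, r < s → α r < α s → InD n α r c → InD n α s (c + 1) →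
      T r c < T s (c + 1)

theorem IsQKT.apply_eq_row_of_initial_column {n : ℕ} {α : ℕ → ℕ} {T : ℕ → ℕ → ℕ}
    (hT : IsQKT n α T) {s c : ℕ} (hcol : ∀ r, 1 ≤ r → r ≤ s → InD n α r c) :
    ∀ r, 1 ≤ r → r ≤ s → T r c = r := by
  intro r
  induction r using Nat.strong_induction_on with
  | _ r ih =>
    intro hr hrs
    have hrc := hcol r hr hrs
    obtain hlt | heq := (hT.rowBound r c hrc).lt_or_eq
    · have hpos := hT.pos r c hrc
      have hks : T r c ≤ s := hlt.le.trans hrs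
      have hfix : T (T r c) c = T r c := ih _ hlt hpos hks
      exact absurd hfix.symm (hT.colDistinct r _ c hrc (hcol _ hpos hks) hlt.ne')
    · exact heq

theorem stmt2 (n : ℕ) (α : ℕ → ℕ) (T : ℕ → ℕ → ℕ) (hT : IsQKT n α T)
    (s t : ℕ) (hsn : s ≤ n) (hrect : ∀ r, 1 ≤ r → r ≤ s → t ≤ α r) :
    ∀ r c, 1 ≤ r → r ≤ s → 1 ≤ c → c ≤ t → T r c = r := by
  intro r c hr hrs hc hct
  exact hT.apply_eq_row_of_initial_column
    (fun r' hr' hr's ↦ ⟨hr', hr's.trans hsn, hc, hct.trans (hrect r' hr' hr's)⟩) r hr hrs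
end

section
/- Let α be a weak composition with all parts ≥ 1 avoiding all patterns in KM = {(0,1,2),(0,0,2,2),(0,0,2,1),(1,0,3,2),(1,0,2,2)}. Let T be a quasi-key tableau of shape α, let i_{m-1} be an index with α_{i_{m-1}-1} < α_{i_{m-1}} (or i_{m-1}=1), and let y be a box of D(α) with row(y) > i_{m-1}. Then T(y) ≥ i_{m-1} - 1. -/
open Finset

/-!
The entries of a column of a quasi-key tableau are distinct and bounded by their row, so if
rows `1, …, m` all reach column `c`, their entries there are exactly `1, …, m`, and any higher
box of column `c` holds an entry `> m`.

Avoiding `012` makes every row below `p - 1` at least as long as row `p - 1`, so the entries of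
row `p - 1` are `≥ p - 2`. For a box `(r, c)` with `r > p`: if `α (p - 1) < α r` and
`c ≤ α (p - 1) + 1`, QKT4 puts `T r c` above `T (p - 1) (c - 1) ≥ p - 2`; otherwise the other
patterns of `KM` force rows `1, …, p - 2` to reach column `c`.
-/

theorem contains_of_gaps {n : ℕ} {α : ℕ → ℕ} (β : List ℕ) (j : Fin β.length → ℕ)
    (hj : StrictMono j) (hrange : ∀ s, 1 ≤ j s ∧ j s ≤ n)
    (hgap : ∀ s t, β.get s ≤ β.get t → α (j s) + (β.get t - β.get s) ≤ α (j t)) :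
    Contains n α β := by
  have habs : ∀ s t, β.get s ≤ β.get t →
      |(β.get s : ℤ) - β.get t| ≤ |(α (j s) : ℤ) - α (j t)| := by
    intro s t hst
    have := hgap s t hst
    rw [abs_sub_comm, abs_of_nonneg (by omega), abs_sub_comm, abs_of_nonneg (by omega)]
    omega
  refine ⟨j, hj, hrange, fun s t => ⟨fun h => ?_, fun h => ?_⟩, fun s t => ?_⟩
  · by_contra hlt
    have := hgap t s (by omega)
    omega
  · have := hgap s t h
    omega
  · rcases le_total (β.get s) (β.get t) with h | h
    · exact habs s t h
    · rw [abs_sub_comm, abs_sub_comm (α (j s) : ℤ)]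
      exact habs t s h

theorem contains_of_gaps_four {n : ℕ} {α : ℕ → ℕ} {a b c d i j k l : ℕ} (hi : 1 ≤ i)
    (hij : i < j) (hjk : j < k) (hkl : k < l) (hl : l ≤ n)
    (hgap : ∀ s t : Fin 4, ![a, b, c, d] s ≤ ![a, b, c, d] t →
      α (![i, j, k, l] s) + (![a, b, c, d] t - ![a, b, c, d] s) ≤ α (![i, j, k, l] t)) :
    Contains n α [a, b, c, d] := by
  refine contains_of_gaps _ ![i, j, k, l] ?_ ?_ fun s t => ?_
  · exact Fin.strictMono_iff_lt_succ.2 fun s => by fin_cases s <;> simp <;> omega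
  · intro s; fin_cases s <;> simp <;> omega
  · have hget : ∀ s : Fin 4, [a, b, c, d].get s = ![a, b, c, d] s := by
      intro s; fin_cases s <;> rfl
    simpa only [hget] using hgap s t

namespace AvoidsKM

variable {n : ℕ} {α : ℕ → ℕ}

theorem not_lt_of_lt (hav : AvoidsKM n α) {i j k : ℕ} (hi : 1 ≤ i) (hij : i < j) (hjk : j < k)
    (hk : k ≤ n) (hlt : α i < α j) : ¬ α j < α k := by
  intro hlt'
  refine hav [0, 1, 2] (by simp) (contains_of_gaps _ ![i, j, k] ?_ ?_ ?_)
  · exact Fin.strictMono_iff_lt_succ.2 fun s => by fin_cases s <;> simp <;> omega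
  · intro s; fin_cases s <;> simp <;> omega
  · intro s t; fin_cases s <;> fin_cases t <;> simp <;> omega

theorem le_length_of_ascent (hav : AvoidsKM n α) {i j k r c : ℕ} (hi : 1 ≤ i) (hij : i < j)
    (hjk : j < k) (hkr : k < r) (hr : r ≤ n) (hasc : α j < α k) (hc : c ≤ α r)
    (hcj : α j < α r → α j + 1 < c) : c ≤ α i := by
  have hji : α j ≤ α i := le_of_not_gt fun h => hav.not_lt_of_lt hi hij hjk (by omega) h hasc
  have hrk : α r ≤ α k := le_of_not_gt (hav.not_lt_of_lt (by omega) hjk hkr hr hasc)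
  by_contra! hic
  have hjr : α j < α r := by omega
  have hc2 := hcj hjr
  rcases hji.eq_or_lt with hji_eq | hji_lt <;> rcases hrk.lt_or_eq with hrk_lt | hrk_eq
  · exact hav [0, 0, 2, 1] (by simp) (contains_of_gaps_four hi hij hjk hkr hr fun s t => by
      fin_cases s <;> fin_cases t <;> simp <;> omega)
  · exact hav [0, 0, 2, 2] (by simp) (contains_of_gaps_four hi hij hjk hkr hr fun s t => by
      fin_cases s <;> fin_cases t <;> simp <;> omega)
  · exact hav [1, 0, 3, 2] (by simp) (contains_of_gaps_four hi hij hjk hkr hr fun s t => by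
      fin_cases s <;> fin_cases t <;> simp <;> omega)
  · exact hav [1, 0, 2, 2] (by simp) (contains_of_gaps_four hi hij hjk hkr hr fun s t => by
      fin_cases s <;> fin_cases t <;> simp <;> omega)

end AvoidsKM

theorem IsQKT.lt_of_lower_rows_reach {n : ℕ} {α : ℕ → ℕ} {T : ℕ → ℕ → ℕ} (hT : IsQKT n α T)
    {m s c : ℕ} (hreach : ∀ i, 1 ≤ i → i ≤ m → c ≤ α i) (hs : InD n α s c) (hms : m < s) :
    m < T s c := by
  obtain ⟨-, hsn, hc, -⟩ := id hs
  have hbox : ∀ i ∈ Icc 1 m, InD n α i c := fun i hi => by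
    rw [mem_Icc] at hi
    exact ⟨hi.1, by omega, hc, hreach i hi.1 hi.2⟩
  by_contra! hle
  obtain ⟨i, hi, hTi⟩ := surj_on_of_inj_on_of_card_le (s := Icc 1 m) (t := Icc 1 m)
    (fun i _ => T i c)
    (fun i hi => mem_Icc.2 ⟨hT.pos i c (hbox i hi),
      (hT.rowBound i c (hbox i hi)).trans (mem_Icc.1 hi).2⟩)
    (fun i i' hi hi' h => by_contra fun hne =>
      hT.colDistinct i i' c (hbox i hi) (hbox i' hi') hne h)
    le_rfl (T s c) (mem_Icc.2 ⟨hT.pos s c hs, hle⟩)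
  exact hT.colDistinct s i c hs (hbox i hi) (by have := mem_Icc.1 hi; omega) hTi

theorem stmt3 (n : ℕ) (α : ℕ → ℕ) (hpos : ∀ i, 1 ≤ i → i ≤ n → 1 ≤ α i)
    (hav : AvoidsKM n α) (T : ℕ → ℕ → ℕ) (hT : IsQKT n α T)
    (p : ℕ) (hp : p = 1 ∨ (2 ≤ p ∧ p ≤ n ∧ α (p - 1) < α p))
    (r c : ℕ) (hbox : InD n α r c) (hrow : p < r) :
    p - 1 ≤ T r c := by
  rcases Nat.lt_or_ge p 3 with hp3 | hp3
  · have := hT.pos r c hbox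
    omega
  obtain ⟨-, hpn, hasc⟩ := hp.resolve_left (by omega)
  obtain ⟨hr1, hrn, hc1, hcr⟩ := id hbox
  have hbelow : ∀ i, 1 ≤ i → i ≤ p - 2 → α (p - 1) ≤ α i := fun i hi hip =>
    le_of_not_gt fun h => hav.not_lt_of_lt hi (by omega) (by omega) hpn h hasc
  by_cases hqkt4 : 2 ≤ c ∧ c ≤ α (p - 1) + 1 ∧ α (p - 1) < α r
  · obtain ⟨hc2, hcq, hqr⟩ := hqkt4
    have hprev : p - 2 < T (p - 1) (c - 1) :=
      hT.lt_of_lower_rows_reach (fun i hi hip => (hbelow i hi hip).trans' (by omega))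
        ⟨by omega, by omega, by omega, by omega⟩ (by omega)
    have hstep : T (p - 1) (c - 1) < T r c := by
      have := hT.qkt4 (p - 1) r (c - 1) (by omega) hqr ⟨by omega, by omega, by omega, by omega⟩
      rw [Nat.sub_add_cancel hc1] at this
      exact this hbox
    omega
  · have hreach : ∀ i, 1 ≤ i → i ≤ p - 2 → c ≤ α i := fun i hi hip => by
      rcases Nat.lt_or_ge c 2 with hc | hc
      · exact (hpos i hi (by omega)).trans' (by omega)
      · exact hav.le_length_of_ascent hi (by omega) (by omega) hrow hrn hasc hcr (by omega)
    have := hT.lt_of_lower_rows_reach hreach hbox (by omega)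
    omega
end

section
/- Let α be a weak composition with all parts ≥ 1 avoiding all patterns in KM. Let T be a quasi-key tableau of shape α. Suppose b lies in the m-th segment of α (m > 1) with α_{i_{m-1}-1} < α_b, and let c > α_{i_{m-1}-1} + 1. Then there is at most one box x of D(α) with row(x) ≥ b, column(x) = c, and T(x) < b. -/
open Finset

/-!
Write `p` for `i_{m-1}`. If two rows `b ≤ r < r'` had entries `< b` in column `c`, then every
row `t < b` other than `p - 1` would also reach column `c`: the rows `p, …, b - 1` because `α` is
weakly decreasing on the segment and `α b ≥ c` (else `p - 1, b, r` is a `012` pattern), the rows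
before `p - 1` because otherwise they form one of the patterns of `KM` with the short row `p - 1`
and the rows `r, r'`. By QKT1 the entries of all these `b` rows in column `c` lie in
`{1, …, b - 1}`, and by QKT2 they are distinct.
-/

namespace AvoidsKM

variable {n : ℕ} {α : ℕ → ℕ}

theorem false_of_pattern_012 (hav : AvoidsKM n α) {i j k : ℕ}
    (hi : 1 ≤ i) (hij : i < j) (hjk : j < k) (hkn : k ≤ n)
    (hαij : α i < α j) (hαjk : α j < α k) (hgap : α i + 2 ≤ α k) : False := by
  refine hav [0, 1, 2] (by simp) ⟨![i, j, k], Fin.strictMono_iff_lt_succ.2 ?_, ?_, ?_, ?_⟩ <;>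
    simp [Fin.forall_fin_succ, le_abs] <;> omega

theorem false_of_pattern_0022 (hav : AvoidsKM n α) {i j k l : ℕ}
    (hi : 1 ≤ i) (hij : i < j) (hjk : j < k) (hkl : k < l) (hln : l ≤ n)
    (hαij : α i = α j) (hαkl : α k = α l) (hgap : α i + 2 ≤ α k) : False := by
  refine hav [0, 0, 2, 2] (by simp) ⟨![i, j, k, l], Fin.strictMono_iff_lt_succ.2 ?_, ?_, ?_, ?_⟩ <;>
    simp [Fin.forall_fin_succ, le_abs] <;> omega

theorem false_of_pattern_0021 (hav : AvoidsKM n α) {i j k l : ℕ}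
    (hi : 1 ≤ i) (hij : i < j) (hjk : j < k) (hkl : k < l) (hln : l ≤ n)
    (hαij : α i = α j) (hαjl : α j < α l) (hαlk : α l < α k) (hgap : α i + 2 ≤ α k) :
    False := by
  refine hav [0, 0, 2, 1] (by simp) ⟨![i, j, k, l], Fin.strictMono_iff_lt_succ.2 ?_, ?_, ?_, ?_⟩ <;>
    simp [Fin.forall_fin_succ, le_abs] <;> omega

theorem false_of_pattern_1032 (hav : AvoidsKM n α) {i j k l : ℕ}
    (hi : 1 ≤ i) (hij : i < j) (hjk : j < k) (hkl : k < l) (hln : l ≤ n)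
    (hαji : α j < α i) (hαil : α i < α l) (hαlk : α l < α k)
    (hgap_ik : α i + 2 ≤ α k) (hgap_jk : α j + 3 ≤ α k) (hgap_jl : α j + 2 ≤ α l) : False := by
  refine hav [1, 0, 3, 2] (by simp) ⟨![i, j, k, l], Fin.strictMono_iff_lt_succ.2 ?_, ?_, ?_, ?_⟩ <;>
    simp [Fin.forall_fin_succ, le_abs] <;> omega

theorem false_of_pattern_1022 (hav : AvoidsKM n α) {i j k l : ℕ}
    (hi : 1 ≤ i) (hij : i < j) (hjk : j < k) (hkl : k < l) (hln : l ≤ n)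
    (hαji : α j < α i) (hαik : α i < α k) (hαkl : α k = α l) (hgap : α j + 2 ≤ α k) :
    False := by
  refine hav [1, 0, 2, 2] (by simp) ⟨![i, j, k, l], Fin.strictMono_iff_lt_succ.2 ?_, ?_, ?_, ?_⟩ <;>
    simp [Fin.forall_fin_succ, le_abs] <;> omega

theorem le_of_lt_short_row (hav : AvoidsKM n α) {s q r r' c : ℕ}
    (hs : 1 ≤ s) (hsq : s < q) (hqr : q < r) (hrr' : r < r') (hr'n : r' ≤ n)
    (hq : α q + 2 ≤ c) (hr' : c ≤ α r') (hr'r : α r' ≤ α r) : c ≤ α s := by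
  by_contra! hsc
  rcases lt_trichotomy (α s) (α q) with hsq' | hsq' | hsq'
  · exact hav.false_of_pattern_012 hs hsq hqr (by omega) hsq' (by omega) (by omega)
  · rcases hr'r.eq_or_lt with hrr | hrr
    · exact hav.false_of_pattern_0022 hs hsq hqr hrr' hr'n hsq' hrr.symm (by omega)
    · exact hav.false_of_pattern_0021 hs hsq hqr hrr' hr'n hsq' (by omega) hrr (by omega)
  · rcases hr'r.eq_or_lt with hrr | hrr
    · exact hav.false_of_pattern_1022 hs hsq hqr hrr' hr'n hsq' (by omega) hrr.symm (by omega)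
    · exact hav.false_of_pattern_1032 hs hsq hqr hrr' hr'n hsq' (by omega) hrr
        (by omega) (by omega) (by omega)

end AvoidsKM

theorem antitoneOn_Icc_of_le_sub_one {β : Type*} [Preorder β] {f : ℕ → β} {p b : ℕ}
    (hf : ∀ t, p < t → t ≤ b → f t ≤ f (t - 1)) : AntitoneOn f (Set.Icc p b) :=
  antitoneOn_of_le_pred Set.ordConnected_Icc fun t ht0 ht htp => by
    rw [Order.pred_eq_sub_one] at htp ⊢
    rw [isMin_iff_eq_bot, Nat.bot_eq_zero] at ht0
    exact hf t (by grind) ht.2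

theorem IsQKT.card_le_of_forall_lt {n : ℕ} {α : ℕ → ℕ} {T : ℕ → ℕ → ℕ} (hT : IsQKT n α T)
    {b c : ℕ} (S : Finset ℕ) (hS : ∀ t ∈ S, InD n α t c ∧ T t c < b) : S.card ≤ b - 1 := by
  have hmaps : ∀ t ∈ S, T t c ∈ Ico 1 b := fun t ht =>
    mem_Ico.2 ⟨hT.pos t c (hS t ht).1, (hS t ht).2⟩
  have hinj : Set.InjOn (fun t => T t c) S := fun x hx y hy hxy => by
    by_contra hne
    exact hT.colDistinct x y c (hS x hx).1 (hS y hy).1 hne hxy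
  simpa using card_le_card_of_injOn (fun t => T t c) hmaps hinj

theorem le_of_two_tall_rows {n : ℕ} {α : ℕ → ℕ} (hav : AvoidsKM n α) {p b : ℕ} (hp2 : 2 ≤ p)
    (hpb : p ≤ b) (hseg : ∀ t, p < t → t ≤ b → α t ≤ α (t - 1)) (hab : α (p - 1) < α b)
    {c : ℕ} (hc : α (p - 1) + 1 < c) {r r' : ℕ} (hbr : b ≤ r) (hrr' : r < r') (hr'n : r' ≤ n)
    (hcr : c ≤ α r) (hcr' : c ≤ α r') {t : ℕ} (ht1 : 1 ≤ t) (htb : t < b) (htp : t ≠ p - 1) :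
    c ≤ α t := by
  have hr'r : α r' ≤ α r := by
    by_contra!
    exact hav.false_of_pattern_012 (i := p - 1) (by omega) (by omega) hrr' hr'n
      (by omega) this (by omega)
  have hcb : c ≤ α b := by
    rcases hbr.eq_or_lt with rfl | hbr
    · exact hcr
    · by_contra!
      exact hav.false_of_pattern_012 (i := p - 1) (by omega) (by omega) hbr (by omega) hab
        (by omega) (by omega)
  rcases Nat.lt_or_ge t (p - 1) with htp' | htp'
  · exact hav.le_of_lt_short_row ht1 htp' (by omega) hrr' hr'n (by omega) hcr' hr'r
  · exact hcb.trans (antitoneOn_Icc_of_le_sub_one hseg ⟨by omega, htb.le⟩ ⟨hpb, le_rfl⟩ htb.le)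

theorem not_lt_of_entries_lt {n : ℕ} {α : ℕ → ℕ} (hav : AvoidsKM n α) {T : ℕ → ℕ → ℕ}
    (hT : IsQKT n α T) {p b : ℕ} (hp2 : 2 ≤ p) (hpb : p ≤ b)
    (hseg : ∀ t, p < t → t ≤ b → α t ≤ α (t - 1)) (hab : α (p - 1) < α b)
    {c : ℕ} (hc : α (p - 1) + 1 < c) {r r' : ℕ} (hbr : b ≤ r)
    (hr : InD n α r c) (hr' : InD n α r' c) (hTr : T r c < b) (hTr' : T r' c < b) :
    ¬ r < r' := by
  intro hrr'
  set S := insert r (insert r' ((Ico 1 b).erase (p - 1)))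
  have hS : ∀ t ∈ S, InD n α t c ∧ T t c < b := by
    intro t ht
    simp only [S, mem_insert, mem_erase, mem_Ico] at ht
    rcases ht with rfl | rfl | ⟨htp, ht1, htb⟩
    · exact ⟨hr, hTr⟩
    · exact ⟨hr', hTr'⟩
    · have hbox : InD n α t c := ⟨ht1, htb.le.trans (hbr.trans hr.2.1), by omega,
        le_of_two_tall_rows hav hp2 hpb hseg hab hc hbr hrr' hr'.2.1 hr.2.2.2 hr'.2.2.2 ht1 htb htp⟩
      exact ⟨hbox, (hT.rowBound t c hbox).trans_lt htb⟩
  have hcard : S.card = b := by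
    rw [card_insert_of_notMem (by simp only [mem_insert, mem_erase, mem_Ico]; omega),
      card_insert_of_notMem (by simp only [mem_erase, mem_Ico]; omega),
      card_erase_of_mem (by simp only [mem_Ico]; omega), Nat.card_Ico]
    omega
  have := hT.card_le_of_forall_lt S hS
  omega

theorem stmt4_general (n : ℕ) (α : ℕ → ℕ)
    (hav : AvoidsKM n α) (T : ℕ → ℕ → ℕ) (hT : IsQKT n α T)
    (p b : ℕ) (hp2 : 2 ≤ p)
    (hpb : p ≤ b) (hseg : ∀ t, p < t → t ≤ b → α t ≤ α (t - 1))
    (hab : α (p - 1) < α b) (c : ℕ) (hc : α (p - 1) + 1 < c) :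
    ∀ r r', b ≤ r → b ≤ r' → InD n α r c → InD n α r' c →
      T r c < b → T r' c < b → r = r' := by
  intro r r' hbr hbr' hr hr' hTr hTr'
  exact le_antisymm
    (not_lt.1 (not_lt_of_entries_lt hav hT hp2 hpb hseg hab hc hbr' hr' hr hTr' hTr))
    (not_lt.1 (not_lt_of_entries_lt hav hT hp2 hpb hseg hab hc hbr hr hr' hTr hTr'))

theorem stmt4 (n : ℕ) (α : ℕ → ℕ) (hpos : ∀ i, 1 ≤ i → i ≤ n → 1 ≤ α i)
    (hav : AvoidsKM n α) (T : ℕ → ℕ → ℕ) (hT : IsQKT n α T)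
    (p b : ℕ) (hp2 : 2 ≤ p) (hpn : p ≤ n) (hasc : α (p - 1) < α p)
    (hpb : p ≤ b) (hbn : b ≤ n) (hseg : ∀ t, p < t → t ≤ b → α t ≤ α (t - 1))
    (hab : α (p - 1) < α b) (c : ℕ) (hc : α (p - 1) + 1 < c) :
    ∀ r r', b ≤ r → b ≤ r' → InD n α r c → InD n α r' c →
      T r c < b → T r' c < b → r = r' :=
  stmt4_general n α hav T hT p b hp2 hpb hseg hab c hc
end

section
/- Let α be a weak composition with all parts ≥ 1 avoiding all patterns in KM. If b lies in seg_m(α) and satisfies any of: b ∈ seg_1(α); or b ∈ seg_m^1(α) with α_{i_{m-1}-1} ≥ α_b; or b ∈ seg_m^2(α); or b ∈ seg_m^3(α); then every quasi-key tableau T of shape α has row b filled entirely with the entry b. -/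
open Finset

/-- Evaluation of `α` with the convention `α_t = 0` for `t > n`. -/
def Aev (n : ℕ) (α : ℕ → ℕ) (t : ℕ) : ℕ := if t ≤ n then α t else 0

/-- `p = i_{m-1}` and `q = i_m` are consecutive segment boundaries of `α`,
so that `seg_m(α) = {p, ..., q-1}`. -/
def SegData (n : ℕ) (α : ℕ → ℕ) (p q : ℕ) : Prop :=
  (p = 1 ∨ (2 ≤ p ∧ p ≤ n ∧ α (p - 1) < α p)) ∧ p < q ∧ q ≤ n + 1 ∧
  (∀ t, p < t → t < q → α t ≤ α (t - 1)) ∧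
  (q = n + 1 ∨ (q ≤ n ∧ α (q - 1) < α q))

/-!
Within a segment `α` is weakly decreasing, and under each of the four hypotheses every row
`r < b` is at least as long as row `b`: before the segment this is forced by avoiding the pattern
`(0,1,2)`, since row `b` (or row `p - 1`) is followed by a strictly longer row. Hence each column
`c ≤ α b` is full in rows `1, …, b`, and in such a column the row bound `T r c ≤ r` together with
column distinctness forces `T r c = r` by induction on `r`.
-/

lemma contains_012_of_lt {n : ℕ} {α : ℕ → ℕ} {a b c : ℕ} (ha : 1 ≤ a) (hab : a < b)
    (hbc : b < c) (hcn : c ≤ n) (h₁ : α a < α b) (h₂ : α b < α c) :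
    Contains n α [0, 1, 2] := by
  have abs_ge : ∀ x y d : ℕ, x + d ≤ y ∨ y + d ≤ x → (d : ℤ) ≤ |(x : ℤ) - (y : ℤ)| := by
    intro x y d h
    rw [le_abs]
    omega
  refine ⟨![a, b, c], ?_, ?_, ?_, ?_⟩
  · refine Fin.strictMono_iff_lt_succ.2 fun i => ?_
    fin_cases i <;> simpa
  · intro s
    fin_cases s <;> simp <;> omega
  · intro s t
    fin_cases s <;> fin_cases t <;> simp <;> omega
  · intro s t
    fin_cases s <;> fin_cases t <;> simp <;>
      first
      | exact abs_ge _ _ 1 (by omega)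
      | exact abs_ge _ _ 2 (by omega)

lemma apply_le_of_not_contains_012 {n : ℕ} {α : ℕ → ℕ} (h : ¬ Contains n α [0, 1, 2])
    {b s r : ℕ} (hbs : b < s) (hsn : s ≤ n) (hlt : α b < α s) (hr : 1 ≤ r) (hrb : r < b) :
    α b ≤ α r := by
  by_contra! hrlt
  exact h (contains_012_of_lt hr hrb hbs hsn hrlt hlt)

lemma SegData.apply_le_of_le {n : ℕ} {α : ℕ → ℕ} {p q : ℕ} (hseg : SegData n α p q)
    {r b : ℕ} (hpr : p ≤ r) (hrb : r ≤ b) (hbq : b < q) : α b ≤ α r := by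
  induction b, hrb using Nat.le_induction with
  | base => rfl
  | succ b hrb ih =>
    have hstep := hseg.2.2.2.1 (b + 1) (by omega) hbq
    rw [Nat.add_sub_cancel] at hstep
    exact hstep.trans (ih (by omega))

lemma IsQKT.apply_eq_self {n : ℕ} {α : ℕ → ℕ} {T : ℕ → ℕ → ℕ} (hT : IsQKT n α T)
    {b c : ℕ} (hbn : b ≤ n) (hc : 1 ≤ c) (hcol : ∀ r, 1 ≤ r → r ≤ b → c ≤ α r)
    {r : ℕ} (hr : 1 ≤ r) (hrb : r ≤ b) : T r c = r := by
  induction r using Nat.strong_induction_on with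
  | _ r ih =>
    have hD : InD n α r c := ⟨hr, hrb.trans hbn, hc, hcol r hr hrb⟩
    by_contra hne
    set v := T r c
    have hv1 : 1 ≤ v := hT.pos r c hD
    have hvr : v < r := (hT.rowBound r c hD).lt_of_ne hne
    have hDv : InD n α v c := ⟨hv1, by omega, hc, hcol v hv1 (by omega)⟩
    exact hT.colDistinct r v c hD hDv hvr.ne' (ih v hvr hv1 (by omega)).symm

lemma SegData.apply_le_of_avoids_012 {n : ℕ} {α : ℕ → ℕ} {p q b : ℕ}
    (h012 : ¬ Contains n α [0, 1, 2]) (hseg : SegData n α p q) (hpb : p ≤ b)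
    (hbq : b < q)
    (hcase : p = 1 ∨ (2 ≤ p ∧ α b ≤ α (p - 1)) ∨ α b < Aev n α q ∨ (b + 1 = q ∧ q ≤ n))
    {r : ℕ} (hr : 1 ≤ r) (hrb : r ≤ b) : α b ≤ α r := by
  rcases le_or_gt p r with hpr | hrp
  · exact hseg.apply_le_of_le hpr hrb hbq
  rcases hcase with rfl | ⟨hp2, hbp⟩ | hbq' | ⟨rfl, hqn⟩
  · omega
  · obtain ⟨-, hpn, hp1⟩ := hseg.1.resolve_left (by omega)
    rcases (show r ≤ p - 1 by omega).eq_or_lt with rfl | hrp1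
    · exact hbp
    · exact hbp.trans (apply_le_of_not_contains_012 h012 (by omega) hpn hp1 hr hrp1)
  · have hqn : q ≤ n := by
      by_contra hqn
      simp [Aev, hqn] at hbq'
    simp only [Aev, hqn, if_true] at hbq'
    exact apply_le_of_not_contains_012 h012 hbq hqn hbq' hr (by omega)
  · obtain ⟨-, hlt⟩ := hseg.2.2.2.2.resolve_left (by omega)
    exact apply_le_of_not_contains_012 h012 hbq hqn hlt hr (by omega)

theorem stmt5_general (n : ℕ) (α : ℕ → ℕ)
    (hav : AvoidsKM n α) (T : ℕ → ℕ → ℕ) (hT : IsQKT n α T)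
    (p q b : ℕ) (hseg : SegData n α p q) (hpb : p ≤ b) (hbq : b < q)
    (hcase :
      p = 1 ∨
      (2 ≤ p ∧ Aev n α q ≤ α b ∧ α b ≤ α (p - 1)) ∨
      (α b < Aev n α q ∧ (2 ≤ p → α b < α (p - 1)) ∧ b + 1 < q) ∨
      (b + 1 = q ∧ q ≤ n)) :
    ∀ c, 1 ≤ c → c ≤ α b → T b c = b := by
  have h012 : ¬ Contains n α [0, 1, 2] := hav _ (by simp)
  have hrows : ∀ r, 1 ≤ r → r ≤ b → α b ≤ α r := fun r hr hrb =>
    hseg.apply_le_of_avoids_012 h012 hpb hbq (by tauto) hr hrb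
  have hbn : b ≤ n := by have := hseg.2.2.1; omega
  have hb : 1 ≤ b := by rcases hseg.1 with hp | hp <;> omega
  intro c hc hcb
  exact hT.apply_eq_self hbn hc (fun r hr hrb => hcb.trans (hrows r hr hrb)) hb le_rfl

theorem stmt5 (n : ℕ) (α : ℕ → ℕ) (hpos : ∀ i, 1 ≤ i → i ≤ n → 1 ≤ α i)
    (hav : AvoidsKM n α) (T : ℕ → ℕ → ℕ) (hT : IsQKT n α T)
    (p q b : ℕ) (hseg : SegData n α p q) (hpb : p ≤ b) (hbq : b < q)
    (hcase :
      p = 1 ∨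
      (2 ≤ p ∧ Aev n α q ≤ α b ∧ α b ≤ α (p - 1)) ∨
      (α b < Aev n α q ∧ (2 ≤ p → α b < α (p - 1)) ∧ b + 1 < q) ∨
      (b + 1 = q ∧ q ≤ n)) :
    ∀ c, 1 ≤ c → c ≤ α b → T b c = b :=
  stmt5_general n α hav T hT p q b hseg hpb hbq hcase
end

section
/- If α is a weak composition of length n with all parts ≥ 1 that avoids all patterns in KM = {(0,1,2),(0,0,2,2),(0,0,2,1),(1,0,3,2),(1,0,2,2)}, and β is obtained from α by a single left swap (interchanging α_i < α_j with i < j), then β also avoids all patterns in KM. -/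
open Finset

/-- `β` is obtained from `α` by a single left swap. -/
def LeftSwapped (n : ℕ) (α β : ℕ → ℕ) : Prop :=
  ∃ i j, 1 ≤ i ∧ i < j ∧ j ≤ n ∧ α i < α j ∧ β i = α j ∧ β j = α i ∧
    ∀ t, t ≠ i → t ≠ j → β t = α t

/-- `γ ∈ lswap(α)`: `γ` is obtained from `α` by a sequence of left swaps. -/
def InLSwap (n : ℕ) (α γ : ℕ → ℕ) : Prop :=
  Relation.ReflTransGen (LeftSwapped n) α γ

/-- `γ >_lex τ` on the entries indexed `1..n`. -/
def LexGT (n : ℕ) (γ τ : ℕ → ℕ) : Prop :=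
  ∃ b, 1 ≤ b ∧ b ≤ n ∧ (∀ s, 1 ≤ s → s < b → γ s = τ s) ∧ τ b < γ b

/-!
Let `β` arise from `α` by moving the larger value `α j` to position `i < j` and `α i` to `j`,
and take an occurrence of a `KM` pattern in `β`. If it meets only one of `i`, `j` and no entry of
it lies strictly between them, shifting that entry to the other position gives an occurrence in
`α`. In all remaining configurations the entries of the occurrence, together with `α i` and
`α j`, already contain a `KM` pattern in `α`; when which one depends on how one further pair of
values compares, one of three derived forbidden configurations of `KM`-free sequences applies.
-/

section Patterns

variable {n : ℕ} {γ : ℕ → ℕ}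

theorem contains_012_iff : Contains n γ [0, 1, 2] ↔
    ∃ a b c, 1 ≤ a ∧ a < b ∧ b < c ∧ c ≤ n ∧ γ a < γ b ∧ γ b < γ c := by
  conv_lhs => simp [Contains, Fin.exists_fin_succ_pi, Fin.forall_fin_succ,
    Fin.strictMono_iff_lt_succ, le_abs]
  exact exists_congr fun a => exists_congr fun b => exists_congr fun c => by omega

theorem contains_0022_iff : Contains n γ [0, 0, 2, 2] ↔
    ∃ a b c d, 1 ≤ a ∧ a < b ∧ b < c ∧ c < d ∧ d ≤ n ∧ γ a = γ b ∧ γ c = γ d ∧ γ a + 2 ≤ γ c := by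
  conv_lhs => simp [Contains, Fin.exists_fin_succ_pi, Fin.forall_fin_succ,
    Fin.strictMono_iff_lt_succ, le_abs]
  exact exists_congr fun a => exists_congr fun b => exists_congr fun c => exists_congr fun d => by
    omega

theorem contains_0021_iff : Contains n γ [0, 0, 2, 1] ↔
    ∃ a b c d, 1 ≤ a ∧ a < b ∧ b < c ∧ c < d ∧ d ≤ n ∧ γ a = γ b ∧ γ a < γ d ∧ γ d < γ c := by
  conv_lhs => simp [Contains, Fin.exists_fin_succ_pi, Fin.forall_fin_succ,
    Fin.strictMono_iff_lt_succ, le_abs]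
  exact exists_congr fun a => exists_congr fun b => exists_congr fun c => exists_congr fun d => by
    omega

theorem contains_1032_iff : Contains n γ [1, 0, 3, 2] ↔
    ∃ a b c d, 1 ≤ a ∧ a < b ∧ b < c ∧ c < d ∧ d ≤ n ∧ γ b < γ a ∧ γ a < γ d ∧ γ d < γ c := by
  conv_lhs => simp [Contains, Fin.exists_fin_succ_pi, Fin.forall_fin_succ,
    Fin.strictMono_iff_lt_succ, le_abs]
  exact exists_congr fun a => exists_congr fun b => exists_congr fun c => exists_congr fun d => by
    omega

theorem contains_1022_iff : Contains n γ [1, 0, 2, 2] ↔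
    ∃ a b c d, 1 ≤ a ∧ a < b ∧ b < c ∧ c < d ∧ d ≤ n ∧ γ b < γ a ∧ γ a < γ c ∧ γ c = γ d := by
  conv_lhs => simp [Contains, Fin.exists_fin_succ_pi, Fin.forall_fin_succ,
    Fin.strictMono_iff_lt_succ, le_abs]
  exact exists_congr fun a => exists_congr fun b => exists_congr fun c => exists_congr fun d => by
    omega

end Patterns

-- `0022` is the only pattern whose distance condition is not implied by its order conditions.
structure KMFree (n : ℕ) (γ : ℕ → ℕ) : Prop where
  not012 : ∀ a b c, ¬ (1 ≤ a ∧ a < b ∧ b < c ∧ c ≤ n ∧ γ a < γ b ∧ γ b < γ c)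
  not0022 : ∀ a b c d,
    ¬ (1 ≤ a ∧ a < b ∧ b < c ∧ c < d ∧ d ≤ n ∧ γ a = γ b ∧ γ c = γ d ∧ γ a + 2 ≤ γ c)
  not0021 : ∀ a b c d,
    ¬ (1 ≤ a ∧ a < b ∧ b < c ∧ c < d ∧ d ≤ n ∧ γ a = γ b ∧ γ a < γ d ∧ γ d < γ c)
  not1032 : ∀ a b c d,
    ¬ (1 ≤ a ∧ a < b ∧ b < c ∧ c < d ∧ d ≤ n ∧ γ b < γ a ∧ γ a < γ d ∧ γ d < γ c)
  not1022 : ∀ a b c d,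
    ¬ (1 ≤ a ∧ a < b ∧ b < c ∧ c < d ∧ d ≤ n ∧ γ b < γ a ∧ γ a < γ c ∧ γ c = γ d)

theorem avoidsKM_iff_kmFree {n : ℕ} {γ : ℕ → ℕ} : AvoidsKM n γ ↔ KMFree n γ := by
  simp only [AvoidsKM, List.forall_mem_cons, List.not_mem_nil, IsEmpty.forall_iff,
    forall_const, and_true, contains_012_iff, contains_0022_iff, contains_0021_iff,
    contains_1032_iff, contains_1022_iff, not_exists]
  exact ⟨fun ⟨h₁, h₂, h₃, h₄, h₅⟩ => ⟨h₁, h₂, h₃, h₄, h₅⟩,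
    fun ⟨h₁, h₂, h₃, h₄, h₅⟩ => ⟨h₁, h₂, h₃, h₄, h₅⟩⟩

namespace KMFree

variable {n : ℕ} {γ : ℕ → ℕ}

theorem not_lt_021 (h : KMFree n γ) (a b c d : ℕ) :
    ¬ (1 ≤ a ∧ a < b ∧ b < c ∧ c < d ∧ d ≤ n ∧ γ b < γ d ∧ γ d < γ c ∧ γ a < γ d) := by
  intro hc
  rcases lt_trichotomy (γ a) (γ b) with hab | hab | hab
  · exact h.not012 a b c (by omega)
  · exact h.not0021 a b c d (by omega)
  · exact h.not1032 a b c d (by omega)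

theorem not_102_gt (h : KMFree n γ) (a b c d : ℕ) :
    ¬ (1 ≤ a ∧ a < b ∧ b < c ∧ c < d ∧ d ≤ n ∧ γ b < γ a ∧ γ a < γ c ∧ γ a < γ d) := by
  intro hc
  rcases lt_trichotomy (γ c) (γ d) with hcd | hcd | hcd
  · exact h.not012 b c d (by omega)
  · exact h.not1022 a b c d (by omega)
  · exact h.not1032 a b c d (by omega)

theorem not_le_022 (h : KMFree n γ) (a b c d : ℕ) :
    ¬ (1 ≤ a ∧ a < b ∧ b < c ∧ c < d ∧ d ≤ n ∧ γ b < γ c ∧ γ a + 2 ≤ γ c ∧ γ c = γ d) := by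
  intro hc
  rcases lt_trichotomy (γ a) (γ b) with hab | hab | hab
  · exact h.not012 a b c (by omega)
  · exact h.not0022 a b c d (by omega)
  · exact h.not1022 a b c d (by omega)

end KMFree

def LeftSwapAt (n i j : ℕ) (α β : ℕ → ℕ) : Prop :=
  1 ≤ i ∧ i < j ∧ j ≤ n ∧ α i < α j ∧ β i = α j ∧ β j = α i ∧ ∀ t, t ≠ i → t ≠ j → β t = α t

namespace LeftSwapAt

variable {n i j : ℕ} {α β : ℕ → ℕ}

theorem apply_cases (hs : LeftSwapAt n i j α β) (t : ℕ) :
    (t < i ∧ β t = α t) ∨ (t = i ∧ β t = α j ∧ α t = α i) ∨ (i < t ∧ t < j ∧ β t = α t) ∨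
      (t = j ∧ β t = α i ∧ α t = α j) ∨ (j < t ∧ β t = α t) := by
  obtain ⟨-, hij, -, -, hβi, hβj, hβ⟩ := hs
  rcases lt_trichotomy t i with hti | rfl | hti
  · exact .inl ⟨hti, hβ t (by omega) (by omega)⟩
  · exact .inr (.inl ⟨rfl, hβi, rfl⟩)
  rcases lt_trichotomy t j with htj | rfl | htj
  · exact .inr (.inr (.inl ⟨hti, htj, hβ t (by omega) (by omega)⟩))
  · exact .inr (.inr (.inr (.inl ⟨rfl, hβj, rfl⟩)))
  · exact .inr (.inr (.inr (.inr ⟨htj, hβ t (by omega) (by omega)⟩)))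

/- Each entry of an occurrence in `β` is placed relative to `i` and `j`; for every resulting
configuration, the candidate list holds an occurrence in `α` among those positions and `i`, `j`. -/
theorem not012 (hs : LeftSwapAt n i j α β) (hα : KMFree n α) (a b c : ℕ) :
    ¬ (1 ≤ a ∧ a < b ∧ b < c ∧ c ≤ n ∧ β a < β b ∧ β b < β c) := by
  have key := hs.apply_cases
  obtain ⟨hi, hij, hj, hlt, -⟩ := hs
  intro hβ
  rcases key a with ha | ha | ha | ha | ha <;> rcases key b with hb | hb | hb | hb | hb <;>
    rcases key c with hc | hc | hc | hc | hc <;>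
    first
      | omega
      | exact hα.not012 a b c (by omega)
      | exact hα.not012 a b j (by omega)
      | exact hα.not012 a j c (by omega)
      | exact hα.not012 i b c (by omega)
      | exact hα.not012 a i c (by omega)
      | exact hα.not_lt_021 a b c j (by omega)
      | exact hα.not_102_gt i a b c (by omega)

theorem not0022 (hs : LeftSwapAt n i j α β) (hα : KMFree n α) (a b c d : ℕ) :
    ¬ (1 ≤ a ∧ a < b ∧ b < c ∧ c < d ∧ d ≤ n ∧ β a = β b ∧ β c = β d ∧ β a + 2 ≤ β c) := by
  have key := hs.apply_cases
  obtain ⟨hi, hij, hj, hlt, -⟩ := hs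
  intro hβ
  rcases key a with ha | ha | ha | ha | ha <;> rcases key b with hb | hb | hb | hb | hb <;>
    rcases key c with hc | hc | hc | hc | hc <;> rcases key d with hd | hd | hd | hd | hd <;>
    first
      | omega
      | exact hα.not0022 a b c d (by omega)
      | exact hα.not0022 j b c d (by omega)
      | exact hα.not012 a b c (by omega)
      | exact hα.not0022 a j c d (by omega)
      | exact hα.not1022 a b c d (by omega)
      | exact hα.not0022 a b j d (by omega)
      | exact hα.not0022 a b d j (by omega)
      | exact hα.not0022 a b c j (by omega)
      | exact hα.not0022 i b c d (by omega)
      | exact hα.not0022 i a c d (by omega)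
      | exact hα.not0022 a i c d (by omega)
      | exact hα.not0022 a b i d (by omega)
      | exact hα.not0021 a b c d (by omega)
      | exact hα.not012 a c d (by omega)

theorem not0021 (hs : LeftSwapAt n i j α β) (hα : KMFree n α) (a b c d : ℕ) :
    ¬ (1 ≤ a ∧ a < b ∧ b < c ∧ c < d ∧ d ≤ n ∧ β a = β b ∧ β a < β d ∧ β d < β c) := by
  have key := hs.apply_cases
  obtain ⟨hi, hij, hj, hlt, -⟩ := hs
  intro hβ
  rcases key a with ha | ha | ha | ha | ha <;> rcases key b with hb | hb | hb | hb | hb <;>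
    rcases key c with hc | hc | hc | hc | hc <;> rcases key d with hd | hd | hd | hd | hd <;>
    first
      | omega
      | exact hα.not0021 a b c d (by omega)
      | exact hα.not012 a c d (by omega)
      | exact hα.not0021 j b c d (by omega)
      | exact hα.not012 a b c (by omega)
      | exact hα.not0021 a j c d (by omega)
      | exact hα.not1032 a b c d (by omega)
      | exact hα.not0021 a b j d (by omega)
      | exact hα.not012 a d j (by omega)
      | exact hα.not0021 a b c j (by omega)
      | exact hα.not0021 i b c d (by omega)
      | exact hα.not0021 i a c d (by omega)
      | exact hα.not0021 a i c d (by omega)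
      | exact hα.not0021 a b c i (by omega)
      | exact hα.not012 a i c (by omega)
      | exact hα.not_102_gt i a c d (by omega)

theorem not1032 (hs : LeftSwapAt n i j α β) (hα : KMFree n α) (a b c d : ℕ) :
    ¬ (1 ≤ a ∧ a < b ∧ b < c ∧ c < d ∧ d ≤ n ∧ β b < β a ∧ β a < β d ∧ β d < β c) := by
  have key := hs.apply_cases
  obtain ⟨hi, hij, hj, hlt, -⟩ := hs
  intro hβ
  rcases key a with ha | ha | ha | ha | ha <;> rcases key b with hb | hb | hb | hb | hb <;>
    rcases key c with hc | hc | hc | hc | hc <;> rcases key d with hd | hd | hd | hd | hd <;>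
    first
      | omega
      | exact hα.not1032 a b c d (by omega)
      | exact hα.not012 a b d (by omega)
      | exact hα.not012 b c d (by omega)
      | exact hα.not1032 j b c d (by omega)
      | exact hα.not012 b j d (by omega)
      | exact hα.not_lt_021 a b c d (by omega)
      | exact hα.not1032 a j c d (by omega)
      | exact hα.not1032 a b j d (by omega)
      | exact hα.not012 b d j (by omega)
      | exact hα.not1032 a b c j (by omega)
      | exact hα.not1032 i b c d (by omega)
      | exact hα.not1032 a i c d (by omega)
      | exact hα.not012 i a d (by omega)
      | exact hα.not1032 a b i d (by omega)
      | exact hα.not1032 a b c i (by omega)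
      | exact hα.not_102_gt a b c d (by omega)

theorem not1022 (hs : LeftSwapAt n i j α β) (hα : KMFree n α) (a b c d : ℕ) :
    ¬ (1 ≤ a ∧ a < b ∧ b < c ∧ c < d ∧ d ≤ n ∧ β b < β a ∧ β a < β c ∧ β c = β d) := by
  have key := hs.apply_cases
  obtain ⟨hi, hij, hj, hlt, -⟩ := hs
  intro hβ
  rcases key a with ha | ha | ha | ha | ha <;> rcases key b with hb | hb | hb | hb | hb <;>
    rcases key c with hc | hc | hc | hc | hc <;> rcases key d with hd | hd | hd | hd | hd <;>
    first
      | omega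
      | exact hα.not1022 a b c d (by omega)
      | exact hα.not012 a b c (by omega)
      | exact hα.not1022 j b c d (by omega)
      | exact hα.not012 b j c (by omega)
      | exact hα.not_le_022 a b c d (by omega)
      | exact hα.not1022 a j c d (by omega)
      | exact hα.not1022 a b j d (by omega)
      | exact hα.not1022 a b d j (by omega)
      | exact hα.not1022 a b c j (by omega)
      | exact hα.not1022 i b c d (by omega)
      | exact hα.not1022 a i c d (by omega)
      | exact hα.not012 i a c (by omega)
      | exact hα.not1022 a b i d (by omega)
      | exact hα.not1032 a b c d (by omega)
      | exact hα.not1022 a b c i (by omega)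
      | exact hα.not012 b c d (by omega)

theorem kmFree (hs : LeftSwapAt n i j α β) (hα : KMFree n α) : KMFree n β :=
  ⟨hs.not012 hα, hs.not0022 hα, hs.not0021 hα, hs.not1032 hα, hs.not1022 hα⟩

end LeftSwapAt

theorem stmt8_general (n : ℕ) (α β : ℕ → ℕ)
    (hav : AvoidsKM n α) (hswap : LeftSwapped n α β) :
    AvoidsKM n β := by
  obtain ⟨i, j, hs⟩ : ∃ i j, LeftSwapAt n i j α β := hswap
  exact avoidsKM_iff_kmFree.2 (hs.kmFree (avoidsKM_iff_kmFree.1 hav))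

theorem stmt8 (n : ℕ) (α β : ℕ → ℕ) (hpos : ∀ i, 1 ≤ i → i ≤ n → 1 ≤ α i)
    (hav : AvoidsKM n α) (hswap : LeftSwapped n α β) :
    AvoidsKM n β :=
  stmt8_general n α β hav hswap
end

section
/- Let α be a weak composition with all parts ≥ 1 avoiding all patterns in KM, let T be a quasi-key tableau of shape α with weight μ, and let 1 ≤ b ≤ n. Then μ_1 + ... + μ_b ≤ α_1 + ... + α_b + flex_b(α). -/
open Finset

/-- The boxes of the skyline diagram `D(α)` as a finite set. -/
def Boxes (n : ℕ) (α : ℕ → ℕ) : Finset (ℕ × ℕ) :=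
  (Finset.Icc 1 n).biUnion (fun i => (Finset.Icc 1 (α i)).image (fun j => (i, j)))

/-- The number of entries of the filling `T` equal to `v`. -/
def wtOf (n : ℕ) (α : ℕ → ℕ) (T : ℕ → ℕ → ℕ) (v : ℕ) : ℕ :=
  ((Boxes n α).filter (fun x => T x.1 x.2 = v)).card

/-- The start `i_{m-1}` of the segment of `α` containing `b`. -/
noncomputable def segStart (α : ℕ → ℕ) (b : ℕ) : ℕ :=
  sSup {t | 1 ≤ t ∧ t ≤ b ∧ (t = 1 ∨ α (t - 1) < α t)}

/-- The end `i_m` for the segment of `α` containing `b` (with `i_{k+1} = n + 1`). -/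
noncomputable def segEnd (n : ℕ) (α : ℕ → ℕ) (b : ℕ) : ℕ :=
  sInf {t | b < t ∧ ((t ≤ n ∧ α (t - 1) < α t) ∨ t = n + 1)}

/-- `rmin_b(α)`. -/
noncomputable def rminC (α : ℕ → ℕ) (b : ℕ) : ℕ :=
  if segStart α b = 1 ∨ α b ≤ α (segStart α b - 1) then b else segStart α b - 1

/-- `rmax_b(α)`. -/
noncomputable def rmaxC (n : ℕ) (α : ℕ → ℕ) (b : ℕ) : ℕ :=
  if Aev n α (segEnd n α b) ≤ Aev n α (b + 1) then b + 1 else segEnd n α b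

/-- `flex_b(α)` (truncated subtraction encodes the `else 0` clause). -/
noncomputable def flexC (n : ℕ) (α : ℕ → ℕ) (b : ℕ) : ℕ :=
  Aev n α (rmaxC n α b) - Aev n α (rminC α b) - 1

/-!
Every entry of a quasi-key tableau is at most its row index, so the boxes of rows `1, …, b`
account for `α₁ + ⋯ + α_b` of the entries `≤ b`. Each remaining entry `≤ b` lies in a box
`(i, j)` with `i > b`. KM-avoidance keeps all rows below `b` no longer than `α_{rmax}`, so
`j ≤ α_{rmax}`; and `j ≥ α_{rmin} + 2`, since otherwise the first `b` rows all reach column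
`j - 1`, which forces the entries of column `j` below row `b` to exceed `b`. Finally, two
such boxes in one column would, by the column distinctness of entries and the avoidance of
the four-letter patterns, again force the first `b` rows to reach column `j - 1`; so each
column contains at most one of them, and there are at most `flex_b(α)`.
-/

lemma contains_012_s10 {n p q r : ℕ} {α : ℕ → ℕ} (hp : 1 ≤ p) (hpq : p < q) (hqr : q < r)
    (hrn : r ≤ n) (h₁ : α p < α q) (h₂ : α q < α r) : Contains n α [0, 1, 2] := by
  refine ⟨![p, q, r], Fin.strictMono_iff_lt_succ.2 ?_, ?_, ?_, ?_⟩ <;>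
    simp [Fin.forall_fin_succ, le_abs] <;> omega

lemma contains_0022_s10 {n p q r s : ℕ} {α : ℕ → ℕ} (hp : 1 ≤ p) (hpq : p < q) (hqr : q < r)
    (hrs : r < s) (hsn : s ≤ n) (h₁ : α p = α q) (h₂ : α r = α s) (h₃ : α p + 2 ≤ α r) :
    Contains n α [0, 0, 2, 2] := by
  refine ⟨![p, q, r, s], Fin.strictMono_iff_lt_succ.2 ?_, ?_, ?_, ?_⟩ <;>
    simp [Fin.forall_fin_succ, le_abs] <;> omega

lemma contains_0021_s10 {n p q r s : ℕ} {α : ℕ → ℕ} (hp : 1 ≤ p) (hpq : p < q) (hqr : q < r)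
    (hrs : r < s) (hsn : s ≤ n) (h₁ : α p = α q) (h₂ : α q < α s) (h₃ : α s < α r) :
    Contains n α [0, 0, 2, 1] := by
  refine ⟨![p, q, r, s], Fin.strictMono_iff_lt_succ.2 ?_, ?_, ?_, ?_⟩ <;>
    simp [Fin.forall_fin_succ, le_abs] <;> omega

lemma contains_1032_s10 {n p q r s : ℕ} {α : ℕ → ℕ} (hp : 1 ≤ p) (hpq : p < q) (hqr : q < r)
    (hrs : r < s) (hsn : s ≤ n) (h₁ : α q < α p) (h₂ : α p < α s) (h₃ : α s < α r) :
    Contains n α [1, 0, 3, 2] := by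
  refine ⟨![p, q, r, s], Fin.strictMono_iff_lt_succ.2 ?_, ?_, ?_, ?_⟩ <;>
    simp [Fin.forall_fin_succ, le_abs] <;> omega

lemma contains_1022_s10 {n p q r s : ℕ} {α : ℕ → ℕ} (hp : 1 ≤ p) (hpq : p < q) (hqr : q < r)
    (hrs : r < s) (hsn : s ≤ n) (h₁ : α q < α p) (h₂ : α p < α r) (h₃ : α r = α s) :
    Contains n α [1, 0, 2, 2] := by
  refine ⟨![p, q, r, s], Fin.strictMono_iff_lt_succ.2 ?_, ?_, ?_, ?_⟩ <;>
    simp [Fin.forall_fin_succ, le_abs] <;> omega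

namespace AvoidsKM

variable {n : ℕ} {α : ℕ → ℕ}

lemma le_of_ascent (hav : AvoidsKM n α) {p q r : ℕ} (hp : 1 ≤ p) (hpq : p < q) (hqr : q < r)
    (hrn : r ≤ n) (h : α p < α q) : α r ≤ α q :=
  not_lt.1 fun h' => hav _ (by simp) (contains_012_s10 hp hpq hqr hrn h h')

lemma short_rows_eq_sub_one (hav : AvoidsKM n α) {r₁ r₂ i i' j : ℕ}
    (hr₁ : 1 ≤ r₁) (h₁₂ : r₁ < r₂) (h₂i : r₂ < i) (hii' : i < i') (hi'n : i' ≤ n)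
    (hr₁j : α r₁ < j) (hr₂j : α r₂ < j) (hji : j ≤ α i) (hji' : j ≤ α i') :
    α r₁ = j - 1 ∧ α r₂ = j - 1 := by
  have hi_ge : α i' ≤ α i := hav.le_of_ascent (p := r₂) (by omega) h₂i hii' hi'n (by omega)
  have hr_ge : α r₂ ≤ α r₁ := not_lt.1 fun h => by
    have := hav.le_of_ascent hr₁ h₁₂ h₂i (by omega) h
    omega
  rcases hi_ge.eq_or_lt with hi | hi <;> rcases hr_ge.eq_or_lt with hr | hr
  · have : ¬ α r₁ + 2 ≤ α i := fun h =>
      hav _ (by simp) (contains_0022_s10 hr₁ h₁₂ h₂i hii' hi'n hr.symm hi.symm h)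
    omega
  · exact (hav _ (by simp) (contains_1022_s10 hr₁ h₁₂ h₂i hii' hi'n hr (by omega) hi.symm)).elim
  · exact (hav _ (by simp) (contains_0021_s10 hr₁ h₁₂ h₂i hii' hi'n hr.symm (by omega) hi)).elim
  · exact (hav _ (by simp) (contains_1032_s10 hr₁ h₁₂ h₂i hii' hi'n hr (by omega) hi)).elim

end AvoidsKM

section Segments

variable {n b : ℕ} {α : ℕ → ℕ}

lemma segStart_mem (hb : 1 ≤ b) :
    1 ≤ segStart α b ∧ segStart α b ≤ b ∧
      (segStart α b = 1 ∨ α (segStart α b - 1) < α (segStart α b)) :=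
  Nat.sSup_mem (s := {t | 1 ≤ t ∧ t ≤ b ∧ (t = 1 ∨ α (t - 1) < α t)})
    ⟨1, le_rfl, hb, Or.inl rfl⟩ ⟨b, fun _ ht => ht.2.1⟩

lemma segStart_le : segStart α b ≤ b :=
  csSup_le' fun _ ht => ht.2.1

lemma le_segStart {t : ℕ} (ht : 1 ≤ t) (htb : t ≤ b) (hasc : α (t - 1) < α t) :
    t ≤ segStart α b :=
  le_csSup ⟨b, fun _ ht => ht.2.1⟩ ⟨ht, htb, Or.inr hasc⟩

lemma segEnd_mem (hbn : b ≤ n) :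
    b < segEnd n α b ∧ ((segEnd n α b ≤ n ∧ α (segEnd n α b - 1) < α (segEnd n α b)) ∨
      segEnd n α b = n + 1) :=
  Nat.sInf_mem (s := {t | b < t ∧ ((t ≤ n ∧ α (t - 1) < α t) ∨ t = n + 1)})
    ⟨n + 1, by omega, Or.inr rfl⟩

lemma segEnd_le_succ (hbn : b ≤ n) : segEnd n α b ≤ n + 1 :=
  Nat.sInf_le ⟨by omega, Or.inr rfl⟩

lemma segEnd_le {t : ℕ} (hbt : b < t) (htn : t ≤ n) (hasc : α (t - 1) < α t) :
    segEnd n α b ≤ t :=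
  Nat.sInf_le ⟨hbt, Or.inl ⟨htn, hasc⟩⟩

lemma antitoneOn_segStart_segEnd (hbn : b ≤ n) :
    AntitoneOn α (Set.Ico (segStart α b) (segEnd n α b)) := by
  refine antitoneOn_of_add_one_le Set.ordConnected_Ico fun a _ ha ha' => not_lt.1 fun hasc => ?_
  rcases le_or_gt (a + 1) b with h | h
  · have := le_segStart (α := α) (by omega) h (by simpa using hasc)
    exact absurd ha.1 (by omega)
  · have := segEnd_le_succ (α := α) hbn
    have := segEnd_le (n := n) h (by have := ha'.2; omega) (by simpa using hasc)
    exact absurd ha'.2 (by omega)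

lemma aev_rminC_le (hav : AvoidsKM n α) (hbn : b ≤ n) {r : ℕ} (hr : 1 ≤ r) (hrb : r ≤ b) :
    Aev n α (rminC α b) ≤ α r := by
  obtain ⟨hi, hib, hasc⟩ := segStart_mem (α := α) (b := b) (by omega)
  set i := segStart α b
  have hsegment : i ≤ r → α b ≤ α r := fun h =>
    antitoneOn_segStart_segEnd hbn ⟨h, by have := (segEnd_mem (α := α) hbn).1; omega⟩
      ⟨hib, (segEnd_mem hbn).1⟩ hrb
  have hprefix : r < i → α (i - 1) ≤ α r := fun h => by
    rcases (show r ≤ i - 1 by omega).eq_or_lt with rfl | hlt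
    · exact le_rfl
    · refine not_lt.1 fun hlt' => ?_
      have := hav.le_of_ascent hr hlt (by omega : i - 1 < i) (by omega) hlt'
      have := hasc.resolve_left (by omega)
      omega
  unfold rminC
  split_ifs with h
  · rw [Aev, if_pos hbn]
    rcases le_or_gt i r with hir | hir
    · exact hsegment hir
    · exact (h.resolve_left (by omega)).trans (hprefix hir)
  · push Not at h
    rw [Aev, if_pos (by omega)]
    rcases le_or_gt i r with hir | hir
    · exact h.2.le.trans (hsegment hir)
    · exact hprefix hir

lemma le_aev_rmaxC (hav : AvoidsKM n α) (hb : 1 ≤ b) (hbn : b ≤ n) {i : ℕ} (hbi : b < i)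
    (hin : i ≤ n) : α i ≤ Aev n α (rmaxC n α b) := by
  have hmax : Aev n α (b + 1) ≤ Aev n α (rmaxC n α b) ∧
      Aev n α (segEnd n α b) ≤ Aev n α (rmaxC n α b) := by
    unfold rmaxC; split_ifs <;> omega
  obtain ⟨hbe, he⟩ := segEnd_mem (α := α) hbn
  set e := segEnd n α b
  rcases lt_or_ge i e with hie | hei
  · have := antitoneOn_segStart_segEnd hbn ⟨segStart_le.trans (by omega : b ≤ b + 1), by omega⟩
      ⟨(segStart_le (α := α)).trans (by omega), hie⟩ (show b + 1 ≤ i by omega)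
    have hA : Aev n α (b + 1) = α (b + 1) := if_pos (by omega)
    omega
  · obtain ⟨hen, hasc⟩ := he.resolve_right (by omega)
    have hie : α i ≤ α e := by
      rcases hei.eq_or_lt with rfl | hlt
      · exact le_rfl
      · exact hav.le_of_ascent (p := e - 1) (by omega) (by omega) hlt hin hasc
    have hA : Aev n α e = α e := if_pos hen
    omega

end Segments

section Boxes

variable {n : ℕ} {α : ℕ → ℕ}

lemma mem_boxes {x : ℕ × ℕ} : x ∈ Boxes n α ↔ InD n α x.1 x.2 := by
  simp only [Boxes, InD, mem_biUnion, mem_image, mem_Icc]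
  constructor
  · rintro ⟨i, hi, j, hj, rfl⟩
    exact ⟨hi.1, hi.2, hj.1, hj.2⟩
  · rintro ⟨h1, h2, h3, h4⟩
    exact ⟨x.1, ⟨h1, h2⟩, x.2, ⟨h3, h4⟩, rfl⟩

lemma card_boxes : #(Boxes n α) = ∑ i ∈ Icc 1 n, α i := by
  rw [Boxes, card_biUnion]
  · refine sum_congr rfl fun i _ => ?_
    rw [card_image_of_injective _ (Prod.mk_right_injective i), Nat.card_Icc, Nat.add_sub_cancel]
  · intro i _ i' _ hii'
    simp only [Function.onFun, disjoint_left, mem_image]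
    rintro _ ⟨j, _, rfl⟩ ⟨j', _, h⟩
    exact hii' (congrArg Prod.fst h).symm

lemma filter_fst_le_boxes {b : ℕ} (hbn : b ≤ n) : {x ∈ Boxes n α | x.1 ≤ b} = Boxes b α := by
  ext x
  simp only [mem_filter, mem_boxes, InD]
  omega

lemma sum_wtOf_eq_card {T : ℕ → ℕ → ℕ} (hpos : ∀ i j, InD n α i j → 1 ≤ T i j) (b : ℕ) :
    ∑ v ∈ Icc 1 b, wtOf n α T v = #{x ∈ Boxes n α | T x.1 x.2 ≤ b} := by
  rw [card_eq_sum_card_fiberwise (f := fun x => T x.1 x.2) (t := Icc 1 b) fun x hx => ?_]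
  · refine sum_congr rfl fun v hv => ?_
    rw [wtOf, filter_filter]
    refine congrArg card (filter_congr fun x _ => ?_)
    have := (mem_Icc.1 hv).2
    constructor
    · intro h; exact ⟨h ▸ this, h⟩
    · exact And.right
  · simp only [mem_coe, mem_filter] at hx
    exact mem_Icc.2 ⟨hpos _ _ (mem_boxes.1 hx.1), hx.2⟩

end Boxes

namespace IsQKT

variable {n : ℕ} {α : ℕ → ℕ} {T : ℕ → ℕ → ℕ}

/-- An entry `T r c < r` would repeat the entry of row `T r c`. -/
lemma entry_eq_row (hT : IsQKT n α T) {c r₀ b : ℕ} (hc : 1 ≤ c) (hbn : b ≤ n)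
    (h : ∀ r, r₀ < r → r ≤ b → c ≤ α r ∧ r₀ < T r c) {r : ℕ} (hr₀ : r₀ < r) (hrb : r ≤ b) :
    T r c = r := by
  induction r using Nat.strong_induction_on with
  | _ r ih =>
    have hbox : InD n α r c := ⟨by omega, by omega, hc, (h r hr₀ hrb).1⟩
    refine (hT.rowBound r c hbox).eq_or_lt.resolve_right fun hlt => ?_
    have hs := (h r hr₀ hrb).2
    exact hT.colDistinct (T r c) r c ⟨by omega, by omega, hc, (h _ hs (by omega)).1⟩ hbox
      hlt.ne (ih _ hlt hs (by omega))

lemma lt_entry_of_lt_entry (hT : IsQKT n α T) {j r₀ b i : ℕ} (hj : 1 ≤ j) (hbn : b ≤ n)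
    (hr₀b : r₀ ≤ b) (hreach : ∀ r, r₀ < r → r ≤ b → j ≤ α r)
    (hgt : ∀ s, r₀ < s → s ≤ n → j ≤ α s → r₀ < T s j)
    (hbi : b < i) (hin : i ≤ n) (hji : j ≤ α i) : b < T i j := by
  refine not_le.1 fun hle => ?_
  have ht := hgt i (by omega) hin hji
  have hid : T (T i j) j = T i j := hT.entry_eq_row hj hbn
    (fun r h1 h2 => ⟨hreach r h1 h2, hgt r h1 (by omega) (hreach r h1 h2)⟩) ht hle
  exact hT.colDistinct (T i j) i j ⟨by omega, by omega, hj, hreach _ ht hle⟩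
    ⟨by omega, hin, hj, hji⟩ (by omega) hid

/-- Let `r₀` be the last of the first `b` rows that stops before column `j` (or `0`). QKT4
against the box `(r₀, j - 1)`, whose entry is `r₀`, pushes every lower entry of column `j`
above `r₀`, and the rows `r₀ + 1, …, b` then fill column `j` with their own indices. -/
lemma lt_entry_of_forall_le_add_one (hT : IsQKT n α T) (hpos : ∀ i, 1 ≤ i → i ≤ n → 1 ≤ α i)
    {b j i : ℕ} (hbn : b ≤ n) (hj : 1 ≤ j) (hcol : ∀ r, 1 ≤ r → r ≤ b → j ≤ α r + 1)
    (hbi : b < i) (hin : i ≤ n) (hji : j ≤ α i) : b < T i j := by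
  set r₀ := Nat.findGreatest (fun r => α r < j) b with hr₀
  have hr₀b : r₀ ≤ b := Nat.findGreatest_le b
  refine hT.lt_entry_of_lt_entry hj hbn hr₀b
    (fun r h1 h2 => not_lt.1 (Nat.findGreatest_is_greatest (P := fun r => α r < j) h1 h2))
    (fun s hs hsn hjs => ?_) hbi hin hji
  rcases Nat.eq_zero_or_pos r₀ with h0 | h0
  · exact h0 ▸ hT.pos s j ⟨by omega, hsn, hj, hjs⟩
  have hα : α r₀ = j - 1 := by
    have := Nat.findGreatest_of_ne_zero hr₀.symm h0.ne'
    have := hcol r₀ h0 hr₀b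
    omega
  have hj₁ : 1 ≤ j - 1 := hα ▸ hpos r₀ h0 (by omega)
  have hdiag : T r₀ (j - 1) = r₀ := hT.entry_eq_row (r₀ := 0) hj₁ hbn
    (fun r h1 h2 => ⟨by have := hcol r h1 h2; omega,
      hT.pos r (j - 1) ⟨h1, by omega, hj₁, by have := hcol r h1 h2; omega⟩⟩) h0 hr₀b
  have hsj : InD n α s (j - 1 + 1) := by rw [Nat.sub_add_cancel hj]; exact ⟨by omega, hsn, hj, hjs⟩
  have := hT.qkt4 r₀ s (j - 1) hs (by omega) ⟨h0, by omega, hj₁, hα.ge⟩ hsj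
  rwa [hdiag, Nat.sub_add_cancel hj] at this

lemma card_filter_entry_le (hT : IsQKT n α T) {j b : ℕ} (hj : 1 ≤ j) :
    #{r ∈ Icc 1 n | j ≤ α r ∧ T r j ≤ b} ≤ b := by
  calc #{r ∈ Icc 1 n | j ≤ α r ∧ T r j ≤ b}
      ≤ #(Icc 1 b) := by
        refine card_le_card_of_injOn (fun r => T r j) (fun r hr => ?_) fun r hr r' hr' h => ?_
        · simp only [mem_coe, mem_filter, mem_Icc] at hr
          exact mem_Icc.2 ⟨hT.pos r j ⟨hr.1.1, hr.1.2, hj, hr.2.1⟩, hr.2.2⟩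
        · simp only [mem_coe, mem_filter, mem_Icc] at hr hr'
          by_contra hne
          exact hT.colDistinct r r' j ⟨hr.1.1, hr.1.2, hj, hr.2.1⟩ ⟨hr'.1.1, hr'.1.2, hj, hr'.2.1⟩
            hne h
    _ = b := by simp

/-- Two such boxes and the column-distinct entries leave at most `b - 2` of the first `b`
rows reaching column `j`. By pattern avoidance, any two short rows end in column `j - 1`,
hence all short rows do, and `lt_entry_of_forall_le_add_one` gives the contradiction. -/
lemma row_eq_of_entry_le (hT : IsQKT n α T) (hav : AvoidsKM n α)
    (hpos : ∀ i, 1 ≤ i → i ≤ n → 1 ≤ α i) {b j i i' : ℕ} (hbn : b ≤ n) (hj : 1 ≤ j)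
    (hbi : b < i) (hin : i ≤ n) (hji : j ≤ α i) (hTi : T i j ≤ b)
    (hbi' : b < i') (hi'n : i' ≤ n) (hji' : j ≤ α i') (hTi' : T i' j ≤ b) : i = i' := by
  wlog hii' : i < i' generalizing i i'
  · rcases (not_lt.1 hii').eq_or_lt with h | h
    · exact h.symm
    · exact (this hbi' hi'n hji' hTi' hbi hin hji hTi h).symm
  exfalso
  have hlong : #{r ∈ Icc 1 b | j ≤ α r} + 2 ≤ b := by
    have hsub : insert i (insert i' {r ∈ Icc 1 b | j ≤ α r}) ⊆
        {r ∈ Icc 1 n | j ≤ α r ∧ T r j ≤ b} := by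
      intro r hr
      simp only [mem_insert, mem_filter, mem_Icc] at hr ⊢
      rcases hr with rfl | rfl | ⟨⟨h1, h2⟩, h3⟩
      · exact ⟨⟨by omega, hin⟩, hji, hTi⟩
      · exact ⟨⟨by omega, hi'n⟩, hji', hTi'⟩
      · exact ⟨⟨h1, by omega⟩, h3, (hT.rowBound r j ⟨h1, by omega, hj, h3⟩).trans h2⟩
    have := (card_le_card hsub).trans (hT.card_filter_entry_le (b := b) hj)
    rwa [card_insert_of_notMem (by simp; omega), card_insert_of_notMem (by simp; omega)] at this
  have hshort : 1 < #{r ∈ Icc 1 b | ¬ j ≤ α r} := by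
    have := card_filter_add_card_filter_not (s := Icc 1 b) (fun r => j ≤ α r)
    simp only [Nat.card_Icc] at this
    omega
  obtain ⟨a, ha, c, hc, hac⟩ := one_lt_card.1 hshort
  have hpair : ∀ r ∈ {r ∈ Icc 1 b | ¬ j ≤ α r}, ∀ r' ∈ {r ∈ Icc 1 b | ¬ j ≤ α r}, r ≠ r' →
      α r = j - 1 := by
    intro r hr r' hr' hne
    simp only [mem_filter, mem_Icc, not_le] at hr hr'
    rcases lt_or_gt_of_ne hne with h | h
    · exact (hav.short_rows_eq_sub_one hr.1.1 h (by omega) hii' hi'n hr.2 hr'.2 hji hji').1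
    · exact (hav.short_rows_eq_sub_one hr'.1.1 h (by omega) hii' hi'n hr'.2 hr.2 hji hji').2
  have hcol : ∀ r, 1 ≤ r → r ≤ b → j ≤ α r + 1 := by
    intro r h1 h2
    by_cases hr : j ≤ α r
    · omega
    have hmem : r ∈ {r ∈ Icc 1 b | ¬ j ≤ α r} := mem_filter.2 ⟨mem_Icc.2 ⟨h1, h2⟩, hr⟩
    rcases eq_or_ne r a with rfl | hra
    · have := hpair r hmem c hc hac; omega
    · have := hpair r hmem a ha hra; omega
  have := hT.lt_entry_of_forall_le_add_one hpos hbn hj hcol hbi hin hji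
  omega

lemma card_entry_le_below_le_flexC (hT : IsQKT n α T) (hav : AvoidsKM n α)
    (hpos : ∀ i, 1 ≤ i → i ≤ n → 1 ≤ α i) {b : ℕ} (hb : 1 ≤ b) (hbn : b ≤ n) :
    #{x ∈ Boxes n α | T x.1 x.2 ≤ b ∧ b < x.1} ≤ flexC n α b := by
  calc #{x ∈ Boxes n α | T x.1 x.2 ≤ b ∧ b < x.1}
      ≤ #(Icc (Aev n α (rminC α b) + 2) (Aev n α (rmaxC n α b))) := by
        refine card_le_card_of_injOn Prod.snd (fun x hx => ?_) fun x hx y hy h => ?_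
        · simp only [mem_coe, mem_filter, mem_boxes] at hx
          obtain ⟨⟨-, hin, hj, hji⟩, hTx, hbx⟩ := hx
          refine mem_Icc.2 ⟨not_lt.1 fun hlt => ?_, hji.trans (le_aev_rmaxC hav hb hbn hbx hin)⟩
          have hcol : ∀ r, 1 ≤ r → r ≤ b → x.2 ≤ α r + 1 := fun r h1 h2 => by
            have := aev_rminC_le hav hbn h1 h2; omega
          have := hT.lt_entry_of_forall_le_add_one hpos hbn hj hcol hbx hin hji
          omega
        · simp only [mem_coe, mem_filter, mem_boxes] at hx hy
          obtain ⟨⟨_, hin, hj, hji⟩, hTx, hbx⟩ := hx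
          obtain ⟨⟨_, hin', _, hji'⟩, hTy, hby⟩ := hy
          rw [h] at hji hTx
          exact Prod.ext
            (hT.row_eq_of_entry_le hav hpos hbn (h ▸ hj) hbx hin hji hTx hby hin' hji' hTy) h
    _ = flexC n α b := by rw [Nat.card_Icc, flexC]; omega

end IsQKT


theorem stmt10 (n : ℕ) (α : ℕ → ℕ) (hpos : ∀ i, 1 ≤ i → i ≤ n → 1 ≤ α i)
    (hav : AvoidsKM n α) (T : ℕ → ℕ → ℕ) (hT : IsQKT n α T)
    (b : ℕ) (hb1 : 1 ≤ b) (hbn : b ≤ n) :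
    ∑ i ∈ Finset.Icc 1 b, wtOf n α T i ≤
      (∑ i ∈ Finset.Icc 1 b, α i) + flexC n α b := by
  have hrows : {x ∈ Boxes n α | T x.1 x.2 ≤ b ∧ x.1 ≤ b} = Boxes b α := by
    rw [← filter_fst_le_boxes hbn]
    refine filter_congr fun x hx => and_iff_right_of_imp fun h => ?_
    exact (hT.rowBound _ _ (mem_boxes.1 hx)).trans h
  rw [sum_wtOf_eq_card hT.pos, ← card_filter_add_card_filter_not (fun x : ℕ × ℕ => x.1 ≤ b),
    filter_filter, filter_filter, hrows, card_boxes]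
  simp only [not_le]
  exact Nat.add_le_add_left (hT.card_entry_le_below_le_flexC hav hpos hb1 hbn) _
end

section
/- Key polynomials are stable under adding a column: for any weak composition α of length n, if α' is defined by α'_i = α_i + 1 for all i, then κ_{α'} = x_1 x_2 ⋯ x_n · κ_α. -/
/-! Multiplication by `x_1 ⋯ x_n` shifts the exponent of every monomial by one, so it preserves
weakly decreasing exponents; and `x_1 ⋯ x_n` is symmetric under `s_j` for `1 ≤ j < n`, so it
commutes with the Demazure operators `π_j`. Now induct on the recursion defining `κ_α`. -/

open Finset

open MvPolynomial in
/-- `IsKey n α f` : `f` is the key polynomial `κ_α` (variables `x_1, ..., x_n`),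
defined by `κ_α = x^α` for weakly decreasing `α`, and `κ_α = π_j (κ_α̂)` where
`α̂` interchanges `α_j < α_{j+1}` and `π_j` is the Demazure operator
`π_j f = (x_j f - x_{j+1} s_j f)/(x_j - x_{j+1})`. -/
inductive IsKey (n : ℕ) : (ℕ → ℕ) → MvPolynomial ℕ ℤ → Prop where
  | base (α : ℕ → ℕ) (hdec : ∀ i j, 1 ≤ i → i ≤ j → j ≤ n → α j ≤ α i) :
      IsKey n α (∏ i ∈ Finset.Icc 1 n, X i ^ α i)
  | step (α : ℕ → ℕ) (j : ℕ) (hj : 1 ≤ j) (hjn : j + 1 ≤ n) (hlt : α j < α (j + 1))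
      (f g : MvPolynomial ℕ ℤ)
      (hf : IsKey n (fun t => if t = j then α (j + 1) else if t = j + 1 then α j else α t) f)
      (heq : (X j - X (j + 1)) * g =
        X j * f - X (j + 1) * (rename (Equiv.swap j (j + 1) : ℕ → ℕ) f)) :
      IsKey n α g

open MvPolynomial

lemma MvPolynomial.rename_prod_X_of_perm {R σ : Type*} [CommSemiring R] (e : Equiv.Perm σ)
    (s : Finset σ) (hs : {a | e a ≠ a} ⊆ s) :
    rename e (∏ i ∈ s, X i : MvPolynomial σ R) = ∏ i ∈ s, X i := by
  simp only [map_prod, rename_X]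
  exact e.prod_comp s X hs

lemma rename_swap_prod_X_Icc {R : Type*} [CommSemiring R] {n j : ℕ} (hj : 1 ≤ j)
    (hjn : j + 1 ≤ n) :
    rename (Equiv.swap j (j + 1) : ℕ → ℕ) (∏ i ∈ Icc 1 n, X i : MvPolynomial ℕ R) =
      ∏ i ∈ Icc 1 n, X i := by
  refine rename_prod_X_of_perm _ _ fun a ha => ?_
  have : a = j ∨ a = j + 1 := by
    by_contra! h
    exact ha (Equiv.swap_apply_of_ne_of_ne h.1 h.2)
  simp only [coe_Icc, Set.mem_Icc]
  omega

lemma prod_X_mul_prod_X_pow {R σ : Type*} [CommSemiring R] (s : Finset σ) (β : σ → ℕ) :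
    (∏ i ∈ s, X i : MvPolynomial σ R) * ∏ i ∈ s, X i ^ β i = ∏ i ∈ s, X i ^ (β i + 1) := by
  rw [← prod_mul_distrib]
  exact prod_congr rfl fun i _ => (pow_succ' _ _).symm

open MvPolynomial in
theorem stmt15 (n : ℕ) (α : ℕ → ℕ) (f : MvPolynomial ℕ ℤ) (hf : IsKey n α f) :
    IsKey n (fun i => α i + 1) ((∏ i ∈ Finset.Icc 1 n, X i) * f) := by
  induction hf with
  | base β hdec =>
    rw [prod_X_mul_prod_X_pow]
    exact IsKey.base _ fun i j h1 h2 h3 => Nat.succ_le_succ (hdec i j h1 h2 h3)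
  | step β j hj hjn hlt f g _ heq ih =>
    refine IsKey.step (fun i => β i + 1) j hj hjn (Nat.succ_lt_succ hlt)
      ((∏ i ∈ Icc 1 n, X i) * f) _ ?_ ?_
    · convert ih using 2 with t
      dsimp only
      split_ifs <;> rfl
    · rw [map_mul, rename_swap_prod_X_Icc hj hjn]
      linear_combination (∏ i ∈ Icc 1 n, (X i : MvPolynomial ℕ ℤ)) * heq
end

section
/- Let D be a Kohnert diagram in KD(α), let i' < i and j' < j, suppose (i',j') and (i,j) are the rightmost boxes of rows i' and i respectively, and every row i'' with i' ≤ i'' < i is initial (its boxes form a prefix (i'',1),...,(i'',j'') or it is empty). Then the diagram D' obtained from D by replacing box (i,j) with (i',j) is also in KD(α). -/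
/-!
Move the box `(i, j)` down one Kohnert move at a time. Each move lands in the highest empty cell
of column `j` below it; if that cell is not yet `(i', j)`, its row lies strictly between `i'` and
`i`, so it is initial and misses column `j`. Hence all its boxes lie left of `j`, and the moved box
is again the rightmost box of its row, ready to move on. Induction on the row of the moving box
ends at `(i', j)`, which is empty because `(i', j')` with `j' < j` is the rightmost box of row `i'`.
-/

open Finset

/-- A single Kohnert move: the rightmost box `(i, j)` of row `i` drops to the
highest empty position `(i', j)` below it in column `j`. -/
def KMove (D D' : Finset (ℕ × ℕ)) : Prop :=
  ∃ i j i', (i, j) ∈ D ∧ (∀ c, (i, c) ∈ D → c ≤ j) ∧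
    1 ≤ i' ∧ i' < i ∧ (i', j) ∉ D ∧ (∀ r, i' < r → r < i → (r, j) ∈ D) ∧
    D' = insert (i', j) (D.erase (i, j))

/-- The set of Kohnert diagrams of `α`. -/
def KD (n : ℕ) (α : ℕ → ℕ) : Set (Finset (ℕ × ℕ)) :=
  {D | Relation.ReflTransGen KMove (Boxes n α) D}

open Relation

lemma exists_highest_gap (D : Finset (ℕ × ℕ)) {i i' j : ℕ} (hii : i' < i) (hgap : (i', j) ∉ D) :
    ∃ r, i' ≤ r ∧ r < i ∧ (r, j) ∉ D ∧ ∀ s, r < s → s < i → (s, j) ∈ D := by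
  refine ⟨Nat.findGreatest (fun r => (r, j) ∉ D) (i - 1), Nat.le_findGreatest (by omega) hgap, ?_,
    Nat.findGreatest_spec (P := fun r => (r, j) ∉ D) (by omega : i' ≤ i - 1) hgap,
    fun s hs hsi => ?_⟩
  · have := Nat.findGreatest_le (P := fun r => (r, j) ∉ D) (i - 1)
    omega
  · by_contra h
    exact Nat.findGreatest_is_greatest hs (by omega) h

lemma mem_insert_erase_of_ne_row {D : Finset (ℕ × ℕ)} {i r s j c : ℕ} (hsr : s ≠ r)
    (hsi : s ≠ i) : (s, c) ∈ insert (r, j) (D.erase (i, j)) ↔ (s, c) ∈ D := by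
  simp [hsr, hsi]

theorem reflTransGen_kMove_insert_erase {D : Finset (ℕ × ℕ)} {i i' j : ℕ} (hi' : 1 ≤ i')
    (hii : i' < i) (hij : (i, j) ∈ D) (hrm : ∀ c, (i, c) ∈ D → c ≤ j) (hgap : (i', j) ∉ D)
    (hrows : ∀ r, i' < r → r < i → (r, j) ∈ D ∨ ∀ c, (r, c) ∈ D → c < j) :
    ReflTransGen KMove D (insert (i', j) (D.erase (i, j))) := by
  induction i using Nat.strong_induction_on generalizing D with
  | _ i ih =>
    obtain ⟨r, hr, hri, hrj, hfilled⟩ := exists_highest_gap D hii hgap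
    have hmove : KMove D (insert (r, j) (D.erase (i, j))) :=
      ⟨i, j, r, hij, hrm, hi'.trans hr, hri, hrj, hfilled, rfl⟩
    rcases hr.eq_or_lt with rfl | hr
    · exact ReflTransGen.single hmove
    have hrow_r : ∀ c, (r, c) ∈ D → c < j := (hrows r hr hri).resolve_left hrj
    have herase : (insert (r, j) (D.erase (i, j))).erase (r, j) = D.erase (i, j) :=
      erase_insert fun h => hrj (mem_of_mem_erase h)
    have hrest := ih r hri (D := insert (r, j) (D.erase (i, j))) hr (mem_insert_self _ _)
      (fun c hc => ?_) ?_ (fun s hs hsr => ?_)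
    · rw [herase] at hrest
      exact ReflTransGen.head hmove hrest
    · rcases mem_insert.mp hc with h | h
      · exact (Prod.ext_iff.mp h).2.le
      · exact (hrow_r c (mem_of_mem_erase h)).le
    · rwa [mem_insert_erase_of_ne_row hr.ne (hr.trans hri).ne]
    · simp_rw [mem_insert_erase_of_ne_row hsr.ne (hsr.trans hri).ne]
      exact hrows s hs (hsr.trans hri)

theorem stmt19 (n : ℕ) (α : ℕ → ℕ) (D : Finset (ℕ × ℕ)) (hD : D ∈ KD n α)
    (i i' j j' : ℕ) (hi' : 1 ≤ i') (hii : i' < i) (hjj : j' < j)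
    (hrm' : (i', j') ∈ D ∧ ∀ c, (i', c) ∈ D → c ≤ j')
    (hrm : (i, j) ∈ D ∧ ∀ c, (i, c) ∈ D → c ≤ j)
    (hinit : ∀ r, i' ≤ r → r < i →
      ∀ c c', (r, c) ∈ D → 1 ≤ c' → c' ≤ c → (r, c') ∈ D) :
    insert (i', j) (D.erase (i, j)) ∈ KD n α := by
  have hgap : (i', j) ∉ D := fun h => (hrm'.2 j h).not_gt hjj
  have hrows : ∀ r, i' < r → r < i → (r, j) ∈ D ∨ ∀ c, (r, c) ∈ D → c < j := by
    intro r hr hri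
    refine or_iff_not_imp_left.mpr fun hrj c hc => ?_
    by_contra! hjc
    exact hrj (hinit r hr.le hri c j hc (by omega) hjc)
  exact ReflTransGen.trans hD
    (reflTransGen_kMove_insert_erase hi' hii hrm.1 hrm.2 hgap hrows)
end
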